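/- arXiv:1611.05103 — 5 statements merged into one kernel-verified Lean document; each statement's English description precedes it below -/
import Mathlib

section
/- Let A be an element of SL(2,ℤ) with entries a, b, c, d such that a ≡ d ≡ 1 (mod m) and b ≡ c ≡ 0 (mod n) for positive integers m, n with m | n. Then A is congruent mod n to the matrix A₀ = [[a, ad−1],[1−ad, d(2−ad)]], i.e., A·A₀⁻¹ ∈ Γ(n) viewed in SL(2,ℤ). -/
open Matrix

abbrev SL2Z := Matrix.SpecialLinearGroup (Fin 2) ℤ

theorem mem_Gamma_of_entries (m n : ℕ) (hm : 0 < m) (hn : 0 < n) (hmn : m ∣ n)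
    (A : SL2Z) (a b c d : ℤ)
    (ha : A 0 0 = a) (hb : A 0 1 = b) (hc : A 1 0 = c) (hd : A 1 1 = d)
    (ha1 : a ≡ 1 [ZMOD m]) (hd1 : d ≡ 1 [ZMOD m])
    (hb0 : b ≡ 0 [ZMOD n]) (hc0 : c ≡ 0 [ZMOD n])
    (A₀ : SL2Z) (hA₀ : (A₀ : Matrix (Fin 2) (Fin 2) ℤ) =
      !![a, a * d - 1; 1 - a * d, d * (2 - a * d)]) :
    A * A₀⁻¹ ∈ CongruenceSubgroup.Gamma n := by
  have hdet : a * d - b * c = 1 := by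
    have := A.2
    rw [Matrix.det_fin_two, ha, hb, hc, hd] at this
    linarith
  have hb0' : (b : ZMod n) = 0 := by
    rw [ZMod.intCast_zmod_eq_zero_iff_dvd]
    exact_mod_cast (Int.modEq_zero_iff_dvd.mp hb0)
  have hc0' : (c : ZMod n) = 0 := by
    rw [ZMod.intCast_zmod_eq_zero_iff_dvd]
    exact_mod_cast (Int.modEq_zero_iff_dvd.mp hc0)
  have had : (a : ZMod n) * d = 1 := by
    have h : ((a * d - b * c : ℤ) : ZMod n) = ((1 : ℤ) : ZMod n) := by rw [hdet]
    push_cast at h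
    rw [hb0', hc0'] at h
    simpa using h
  have hinv : A₀⁻¹ = ⟨![![A₀.1 1 1, -A₀.1 0 1], ![-A₀.1 1 0, A₀.1 0 0]],
      Matrix.SpecialLinearGroup.SL2_inv_expl_det A₀⟩ :=
    Matrix.SpecialLinearGroup.SL2_inv_expl A₀
  have e00 : (A₀⁻¹ : SL2Z) 0 0 = d * (2 - a * d) := by
    rw [hinv]; show A₀.1 1 1 = _; rw [hA₀]; simp
  have e01 : (A₀⁻¹ : SL2Z) 0 1 = 1 - a * d := by
    rw [hinv]; show -A₀.1 0 1 = _; rw [hA₀]; simp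
  have e10 : (A₀⁻¹ : SL2Z) 1 0 = a * d - 1 := by
    rw [hinv]; show -A₀.1 1 0 = _; rw [hA₀]; simp
  have e11 : (A₀⁻¹ : SL2Z) 1 1 = a := by
    rw [hinv]; show A₀.1 0 0 = _; rw [hA₀]; simp
  have hmul : ∀ i j, (A * A₀⁻¹) i j =
      A i 0 * (A₀⁻¹ : SL2Z) 0 j + A i 1 * (A₀⁻¹ : SL2Z) 1 j := by
    intro i j
    show (A.1 * A₀⁻¹.1) i j = _
    rw [Matrix.mul_apply, Fin.sum_univ_two]
  rw [CongruenceSubgroup.Gamma_mem]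
  refine ⟨?_, ?_, ?_, ?_⟩ <;> rw [hmul] <;>
    simp only [ha, hb, hc, hd, e00, e01, e10, e11] <;> push_cast <;>
    simp only [hb0', hc0']
  · linear_combination (1 - (a : ZMod n) * d) * had
  · linear_combination (-(a : ZMod n)) * had
  · linear_combination (d : ZMod n) * had
  · linear_combination had
end

section
/- Let A = [[a,b],[c,d]] ∈ SL(2,ℤ) with a ≡ 1 (mod m) and gcd(a, n) ≠ 1, where m, n are positive integers with m | n. Then there exists an integer k such that a + bmk is a prime number larger than n; in particular the upper-left entry of A·[[1,0],[mk,1]] is coprime to n. -/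
/-!
By `ad - bc = 1` the entry `a` is coprime to `b`, and `a ≡ 1 (mod m)` makes it coprime to `m`,
hence to `bm`; here `b ≠ 0`, for otherwise `a` is a unit and coprime to `n`. Dirichlet's theorem
then yields a prime `p > n` in the progression `a + bmℤ`, and such a prime is coprime to `n`.
-/

namespace Int

lemma isCoprime_of_modEq_one {a m : ℤ} (h : a ≡ 1 [ZMOD m]) : IsCoprime a m := by
  obtain ⟨t, ht⟩ := h.dvd
  exact ⟨1, t, by linarith⟩

/-- Dirichlet's theorem for an integer progression `a + qℤ` with `q` of either sign. -/
lemma exists_prime_gt_add_mul (N : ℕ) {a q : ℤ} (hq : q ≠ 0) (h : IsCoprime a q) :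
    ∃ k : ℤ, Prime (a + q * k) ∧ (N : ℤ) < a + q * k := by
  have hcop : IsCoprime a (q.natAbs : ℤ) := by
    rwa [natCast_natAbs, IsCoprime.abs_right_iff]
  obtain ⟨p, hpN, hp, hpa⟩ :=
    Nat.forall_exists_prime_gt_and_zmodEq N (natAbs_ne_zero.mpr hq) hcop
  obtain ⟨k, hk⟩ := natAbs_dvd.mp hpa.symm.dvd
  have hpk : a + q * k = p := by linarith
  exact ⟨k, hpk ▸ Nat.prime_iff_prime_int.mp hp, hpk ▸ mod_cast hpN⟩

lemma isCoprime_of_prime_of_lt {p n : ℤ} (hp : Prime p) (hn : 0 < n) (hnp : n < p) :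
    IsCoprime p n :=
  (Prime.coprime_iff_not_dvd hp).mpr fun hdvd => (le_of_dvd hn hdvd).not_gt hnp

end Int

theorem exists_k_prime_upper_left_general (m n : ℕ) (hm : 0 < m) (hn : 0 < n)
    (a b c d : ℤ) (hdet : a * d - b * c = 1)
    (ha1 : a ≡ 1 [ZMOD m]) (han : ¬ IsCoprime a (n : ℤ)) :
    ∃ k : ℤ, Prime (a + b * (m : ℤ) * k) ∧ (n : ℤ) < a + b * (m : ℤ) * k ∧
      IsCoprime (a + b * (m : ℤ) * k) (n : ℤ) := by
  have hb : b ≠ 0 := by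
    rintro rfl
    exact han ⟨d, 0, by linarith⟩
  have hab : IsCoprime a b := ⟨d, -c, by linarith⟩
  have habm : IsCoprime a (b * m) := hab.mul_right (Int.isCoprime_of_modEq_one ha1)
  obtain ⟨k, hp, hpn⟩ := Int.exists_prime_gt_add_mul n (mul_ne_zero hb (by positivity)) habm
  exact ⟨k, hp, hpn, Int.isCoprime_of_prime_of_lt hp (by positivity) hpn⟩

theorem exists_k_prime_upper_left (m n : ℕ) (hm : 0 < m) (hn : 0 < n) (hmn : m ∣ n)
    (a b c d : ℤ) (hdet : a * d - b * c = 1)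
    (ha1 : a ≡ 1 [ZMOD m]) (han : ¬ IsCoprime a (n : ℤ)) :
    ∃ k : ℤ, Prime (a + b * (m : ℤ) * k) ∧ (n : ℤ) < a + b * (m : ℤ) * k ∧
      IsCoprime (a + b * (m : ℤ) * k) (n : ℤ) :=
  exists_k_prime_upper_left_general m n hm hn a b c d hdet ha1 han
end

section
/- Let ρ: B₃ → GL(2,ℂ) be a representation with ρ(σ₁) = [[λ₁, λ₁],[0, λ₂]] and ρ(σ₂) = [[λ₂, 0],[−λ₂, λ₁]] for nonzero complex λ₁, λ₂. Then ρ factors through the quotient π: B₃ → PSL(2,ℤ) (i.e., (σ₁σ₂)³ ∈ ker ρ) if and only if −(λ₁λ₂)³ = 1. -/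
open Matrix

/-- The braid relation `σ₁σ₂σ₁ = σ₂σ₁σ₂` as a relator in the free group on two generators. -/
def braidRels : Set (FreeGroup (Fin 2)) :=
  {FreeGroup.of 0 * FreeGroup.of 1 * FreeGroup.of 0 *
    (FreeGroup.of 1 * FreeGroup.of 0 * FreeGroup.of 1)⁻¹}

/-- The braid group on three strands. -/
abbrev B3 := PresentedGroup braidRels

def s1 : B3 := PresentedGroup.of 0
def s2 : B3 := PresentedGroup.of 1

theorem factors_iff_2dim (l1 l2 : ℂ) (h1 : l1 ≠ 0) (h2 : l2 ≠ 0)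
    (ρ : B3 →* Matrix.GeneralLinearGroup (Fin 2) ℂ)
    (hs1 : (ρ s1 : Matrix (Fin 2) (Fin 2) ℂ) = !![l1, l1; 0, l2])
    (hs2 : (ρ s2 : Matrix (Fin 2) (Fin 2) ℂ) = !![l2, 0; -l2, l1]) :
    (s1 * s2) ^ 3 ∈ ρ.ker ↔ -(l1 * l2) ^ 3 = 1 := by
  have key : ((ρ ((s1 * s2) ^ 3) : Matrix.GeneralLinearGroup (Fin 2) ℂ) :
      Matrix (Fin 2) (Fin 2) ℂ) = !![-(l1 * l2) ^ 3, 0; 0, -(l1 * l2) ^ 3] := by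
    rw [map_pow, _root_.map_mul]
    push_cast [Units.val_pow_eq_pow_val, Units.val_mul]
    rw [hs1, hs2]
    simp only [pow_succ, pow_zero, one_mul, Matrix.mul_fin_two]
    congr 1 <;> ring
  rw [MonoidHom.mem_ker, Units.ext_iff, key, Units.val_one, Matrix.one_fin_two]
  constructor
  · intro h
    have := congrArg (fun M => M 0 0) h
    simpa using this
  · intro h
    rw [h]
end

section
/- Let λ₁, λ₂, λ₃ be nonzero complex numbers and define A = [[λ₁, λ₁λ₃λ₂⁻¹ + λ₂, λ₂],[0, λ₂, λ₂],[0, 0, λ₃]] and B = [[λ₃, 0, 0],[−λ₂, λ₂, 0],[λ₂, −λ₁λ₃λ₂⁻¹ − λ₂, λ₁]]. Then ABA = BAB, so σ₁ ↦ A, σ₂ ↦ B defines a representation of B₃, and (AB)³ = (λ₁λ₂λ₃)² · I. -/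
open Matrix

set_option maxHeartbeats 1000000 in
lemma braid_aux (l1 l2 l3 k : ℂ) (hk : k * l2 = l1 * l3) :
    let A : Matrix (Fin 3) (Fin 3) ℂ :=
      !![l1, k + l2, l2; 0, l2, l2; 0, 0, l3]
    let B : Matrix (Fin 3) (Fin 3) ℂ :=
      !![l3, 0, 0; -l2, l2, 0; l2, -k - l2, l1]
    A * B * A = B * A * B ∧
      (A * B) ^ 3 = ((l1 * l2 * l3) ^ 2) • (1 : Matrix (Fin 3) (Fin 3) ℂ) := by
  intro A B
  refine ⟨?_, ?_⟩
  · simp only [A, B, Matrix.mul_fin_three]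
    ext i j
    fin_cases i <;> fin_cases j <;>
      simp only [Fin.zero_eta, Fin.mk_one, Fin.reduceFinMk, Matrix.cons_val',
        Matrix.cons_val_zero, Matrix.cons_val_one, Matrix.cons_val_two,
        Matrix.head_cons, Matrix.tail_cons, Matrix.empty_val',
        Matrix.cons_val_fin_one, Matrix.of_apply, Matrix.head_fin_const]
    · linear_combination (l3 - l1) * hk
    · linear_combination (-l2 - k) * hk
    · linear_combination (-l2) * hk
    · linear_combination (-l2) * hk
    · ring
    · linear_combination (-l2) * hk
    · linear_combination l2 * hk
    · linear_combination (-l2 - k) * hk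
    · linear_combination (l1 - l3) * hk
  · simp only [A, B, pow_succ, pow_zero, one_mul, Matrix.mul_fin_three,
      Matrix.one_fin_three, Matrix.smul_of, Matrix.smul_cons, smul_eq_mul,
      mul_zero, mul_one, Matrix.smul_empty]
    ext i j
    fin_cases i <;> fin_cases j <;>
      simp only [Fin.zero_eta, Fin.mk_one, Fin.reduceFinMk, Matrix.cons_val',
        Matrix.cons_val_zero, Matrix.cons_val_one, Matrix.cons_val_two,
        Matrix.head_cons, Matrix.tail_cons, Matrix.empty_val',
        Matrix.cons_val_fin_one, Matrix.of_apply, Matrix.head_fin_const]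
    · linear_combination (-2*l1*l2*l2*l3 - l1*l1*l3*l3 + 2*k*l1*l2*l3 - k*k*l2*l2) * hk
    · linear_combination (2*l1*l2*l2*l3 + 2*k*l1*l2*l3) * hk
    · linear_combination (-3*l1*l1*l2*l3 + k*l1*l2*l2) * hk
    · linear_combination (-2*l1*l2*l2*l3) * hk
    · linear_combination (2*l1*l2*l2*l3 + k*l1*l2*l3 - k*k*l2*l2) * hk
    · linear_combination (-l1*l1*l2*l3 + k*l1*l2*l2) * hk
    · linear_combination (-3*l1*l2*l3*l3 + k*l2*l2*l3) * hk
    · linear_combination (l1*l2*l3*l3 - k*l2*l2*l3 + k*l1*l3*l3 - k*k*l2*l3) * hk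
    · linear_combination (-l1*l1*l3*l3 + k*l1*l2*l3) * hk

theorem braid_rel_and_center_3dim (l1 l2 l3 : ℂ) (h1 : l1 ≠ 0) (h2 : l2 ≠ 0) (h3 : l3 ≠ 0) :
    let A : Matrix (Fin 3) (Fin 3) ℂ :=
      !![l1, l1 * l3 * l2⁻¹ + l2, l2; 0, l2, l2; 0, 0, l3]
    let B : Matrix (Fin 3) (Fin 3) ℂ :=
      !![l3, 0, 0; -l2, l2, 0; l2, -(l1 * l3 * l2⁻¹) - l2, l1]
    A * B * A = B * A * B ∧
      (A * B) ^ 3 = ((l1 * l2 * l3) ^ 2) • (1 : Matrix (Fin 3) (Fin 3) ℂ) := by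
  exact braid_aux l1 l2 l3 (l1 * l3 * l2⁻¹) (by field_simp)
end

section
/- Let ρ: B₃ → GL(3,ℂ) be given by the Tuba–Wenzl matrices depending on nonzero eigenvalues λ₁, λ₂, λ₃ (ρ(σ₁) upper triangular with diagonal λ₁, λ₂, λ₃ as in the standard classification). Then ρ factors through π: B₃ → PSL(2,ℤ) if and only if (λ₁λ₂λ₃)² = 1. -/
open Matrix

/-!
The image of the central element `(σ₁σ₂)³` is the cube of `ρ(σ₁)ρ(σ₂)`, and a direct computation
shows that this cube is the scalar matrix `(λ₁λ₂λ₃)²`; a scalar matrix is the identity exactly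
when the scalar is `1`.
-/

section TubaWenzl

variable {K : Type*} [Field K] (l1 l2 l3 : K)

def tubaWenzlS1 : Matrix (Fin 3) (Fin 3) K :=
  !![l1, l1 * l3 * l2⁻¹ + l2, l2; 0, l2, l2; 0, 0, l3]

def tubaWenzlS2 : Matrix (Fin 3) (Fin 3) K :=
  !![l3, 0, 0; -l2, l2, 0; l2, -(l1 * l3 * l2⁻¹) - l2, l1]

variable {l2}

theorem tubaWenzlS1_mul_tubaWenzlS2 (hl2 : l2 ≠ 0) :
    tubaWenzlS1 l1 l2 l3 * tubaWenzlS2 l1 l2 l3 =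
      !![0, 0, l1 * l2; 0, -(l1 * l3), l1 * l2;
        l2 * l3, -(l1 * l3 ^ 2 * l2⁻¹) - l2 * l3, l1 * l3] := by
  rw [tubaWenzlS1, tubaWenzlS2, mul_fin_three]
  simp only [EmbeddingLike.apply_eq_iff_eq, vecCons_inj, and_true]
  refine ⟨⟨?_, ?_, ?_⟩, ⟨?_, ?_, ?_⟩, ⟨?_, ?_, ?_⟩⟩ <;> field_simp <;> ring

theorem tubaWenzlS1_mul_tubaWenzlS2_pow_three (hl2 : l2 ≠ 0) :
    (tubaWenzlS1 l1 l2 l3 * tubaWenzlS2 l1 l2 l3) ^ 3 =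
      scalar (Fin 3) ((l1 * l2 * l3) ^ 2) := by
  rw [tubaWenzlS1_mul_tubaWenzlS2 l1 l3 hl2, pow_three, mul_fin_three, mul_fin_three, scalar_apply,
    diagonal_fin_three]
  simp only [EmbeddingLike.apply_eq_iff_eq, vecCons_inj, and_true]
  refine ⟨⟨?_, ?_, ?_⟩, ⟨?_, ?_, ?_⟩, ⟨?_, ?_, ?_⟩⟩ <;> field_simp <;> ring

end TubaWenzl

theorem MonoidHom.mem_ker_iff_of_coe_eq_scalar {G R n : Type*} [Group G] [CommRing R]
    [Fintype n] [DecidableEq n] [Nonempty n] {ρ : G →* GL n R} {g : G} {c : R}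
    (hg : (ρ g : Matrix n n R) = scalar n c) : g ∈ ρ.ker ↔ c = 1 := by
  rw [MonoidHom.mem_ker, Units.ext_iff, hg, Units.val_one, ← map_one (scalar n), scalar_inj]

theorem factors_iff_3dim_general (l1 l2 l3 : ℂ) (h2 : l2 ≠ 0)
    (ρ : B3 →* Matrix.GeneralLinearGroup (Fin 3) ℂ)
    (hs1 : (ρ s1 : Matrix (Fin 3) (Fin 3) ℂ) =
      !![l1, l1 * l3 * l2⁻¹ + l2, l2; 0, l2, l2; 0, 0, l3])
    (hs2 : (ρ s2 : Matrix (Fin 3) (Fin 3) ℂ) =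
      !![l3, 0, 0; -l2, l2, 0; l2, -(l1 * l3 * l2⁻¹) - l2, l1]) :
    (s1 * s2) ^ 3 ∈ ρ.ker ↔ (l1 * l2 * l3) ^ 2 = 1 := by
  apply MonoidHom.mem_ker_iff_of_coe_eq_scalar
  rw [map_pow, map_mul, Units.val_pow_eq_pow_val, Units.val_mul, hs1, hs2]
  exact tubaWenzlS1_mul_tubaWenzlS2_pow_three l1 l3 h2

theorem factors_iff_3dim (l1 l2 l3 : ℂ) (h1 : l1 ≠ 0) (h2 : l2 ≠ 0) (h3 : l3 ≠ 0)
    (ρ : B3 →* Matrix.GeneralLinearGroup (Fin 3) ℂ)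
    (hs1 : (ρ s1 : Matrix (Fin 3) (Fin 3) ℂ) =
      !![l1, l1 * l3 * l2⁻¹ + l2, l2; 0, l2, l2; 0, 0, l3])
    (hs2 : (ρ s2 : Matrix (Fin 3) (Fin 3) ℂ) =
      !![l3, 0, 0; -l2, l2, 0; l2, -(l1 * l3 * l2⁻¹) - l2, l1]) :
    (s1 * s2) ^ 3 ∈ ρ.ker ↔ (l1 * l2 * l3) ^ 2 = 1 :=
  factors_iff_3dim_general l1 l2 l3 h2 ρ hs1 hs2
end
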